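/- Let β̂ be a random vector in ℝ^p, measurable with respect to ε, such that |β̂|₁ ≤ L and ‖Y − Xβ̂‖² ≤ ‖Y − Xβ*‖², where Y = Xβ* + ε. If |β*|₁ ≤ L, then E( ‖Xβ* − Xβ̂‖² ) ≤ 4Lσ (2n M^{1/2} log(2p))^{1/2}. In particular this bound holds for any measurable minimizer β̂^{(L)} of ‖Y − Xβ‖ subject to |β|₁ ≤ L. -/

import Mathlib

open MeasureTheory ProbabilityTheory Real

open NNReal Finset

/-!
Expanding `‖Y - Xβ̂‖² ≤ ‖Y - Xβ*‖²` gives the basic inequality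
`‖X(β* - β̂)‖² ≤ 2 ⟨β̂ - β*, Xᵀε⟩ ≤ 2 |β̂ - β*|₁ maxⱼ |Vⱼ| ≤ 4 L maxⱼ |Vⱼ|`, where
`Vⱼ = (Xᵀε)ⱼ = ∑ᵢ xᵢⱼ εᵢ` is sub-Gaussian with variance proxy `c = σ² ∑ᵢ xᵢⱼ² ≤ σ² n √M`
(Cauchy–Schwarz against the fourth moments). By Jensen,
`t · E maxⱼ |Vⱼ| ≤ E log ∑ⱼ (e^{t Vⱼ} + e^{-t Vⱼ}) ≤ log (2p) + c t² / 2`,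
and `t = √(2 log (2p) / c)` gives `E maxⱼ |Vⱼ| ≤ √(2 c log (2p))`.
-/

section

variable {ι κ : Type*} [Fintype ι] [Fintype κ]

lemma sum_sq_le_card_mul_sqrt (f : ι → ℝ) {M : ℝ}
    (hM : 1 / (Fintype.card ι : ℝ) * ∑ i, f i ^ 4 ≤ M) :
    ∑ i, f i ^ 2 ≤ Fintype.card ι * √M := by
  set N : ℝ := (Fintype.card ι : ℝ)
  have hcs : (∑ i, f i ^ 2) ^ 2 ≤ N * ∑ i, f i ^ 4 := by
    have := sq_sum_le_card_mul_sum_sq (s := univ) (f := fun i => f i ^ 2)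
    simp_rw [← pow_mul, card_univ] at this
    exact this
  have hN : N * ∑ i, f i ^ 4 = N ^ 2 * (1 / N * ∑ i, f i ^ 4) := by
    rcases eq_or_ne N 0 with h | h
    · simp [h]
    · field_simp
  rw [← sqrt_sq (by positivity : 0 ≤ N), ← sqrt_mul (sq_nonneg N)]
  refine (le_sqrt (by positivity) (by nlinarith)).2 ?_
  nlinarith [hN, mul_le_mul_of_nonneg_left hM (sq_nonneg N)]

lemma sum_sq_sub_le_of_sum_sq_residual_le (x : ι → κ → ℝ) (β b : κ → ℝ) (e : ι → ℝ)
    (h : ∑ i, (∑ j, x i j * β j + e i - ∑ j, x i j * b j) ^ 2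
      ≤ ∑ i, (∑ j, x i j * β j + e i - ∑ j, x i j * β j) ^ 2) :
    ∑ i, (∑ j, x i j * β j - ∑ j, x i j * b j) ^ 2
      ≤ 2 * ∑ j, (b j - β j) * ∑ i, x i j * e i := by
  have hcross : ∑ j, (b j - β j) * ∑ i, x i j * e i
      = -∑ i, (∑ j, x i j * β j - ∑ j, x i j * b j) * e i := by
    simp only [mul_sum, sum_mul, ← sum_sub_distrib, ← sum_neg_distrib]
    rw [sum_comm]
    refine sum_congr rfl fun i _ => sum_congr rfl fun j _ => by ring
  have hexpand : ∀ i, (∑ j, x i j * β j + e i - ∑ j, x i j * b j) ^ 2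
      = (∑ j, x i j * β j - ∑ j, x i j * b j) ^ 2
        + 2 * ((∑ j, x i j * β j - ∑ j, x i j * b j) * e i) + e i ^ 2 := fun i => by ring
  simp only [hexpand, add_sub_cancel_left, sum_add_distrib, ← mul_sum] at h
  linarith

lemma sum_mul_le_sum_abs_mul_iSup_abs [Nonempty κ] (a v : κ → ℝ) :
    ∑ j, a j * v j ≤ (∑ j, |a j|) * ⨆ j, |v j| := by
  rw [sum_mul]
  refine sum_le_sum fun j _ => ?_
  calc a j * v j ≤ |a j| * |v j| := (le_abs_self _).trans (abs_mul _ _).le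
    _ ≤ |a j| * ⨆ j, |v j| := by
      gcongr
      exact le_ciSup (Set.finite_range fun j => |v j|).bddAbove j

lemma exp_mul_abs_le_sum_exp (v : κ → ℝ) (t : ℝ) (j : κ) :
    exp (t * |v j|) ≤ ∑ k, (exp (t * v k) + exp (-t * v k)) := by
  refine le_trans ?_ (single_le_sum (f := fun k => exp (t * v k) + exp (-t * v k))
    (fun k _ => by positivity) (mem_univ j))
  rcases abs_cases (v j) with ⟨h, -⟩ | ⟨h, -⟩
  · rw [h]; exact le_add_of_nonneg_right (exp_nonneg _)
  · rw [h, mul_neg, ← neg_mul]; exact le_add_of_nonneg_left (exp_nonneg _)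

lemma iSup_abs_le_log_sum_exp_div [Nonempty κ] (v : κ → ℝ) {t : ℝ} (ht : 0 < t) :
    ⨆ j, |v j| ≤ log (∑ k, (exp (t * v k) + exp (-t * v k))) / t := by
  refine ciSup_le fun j => (le_div_iff₀ ht).2 ?_
  rw [mul_comm, le_log_iff_exp_le (by positivity)]
  exact exp_mul_abs_le_sum_exp v t j

lemma sum_sq_sub_le_four_mul_iSup_abs [Nonempty κ] (x : ι → κ → ℝ) (β b : κ → ℝ) (e : ι → ℝ)
    {L : ℝ} (hβ : ∑ j, |β j| ≤ L) (hb : ∑ j, |b j| ≤ L)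
    (h : ∑ i, (∑ j, x i j * β j + e i - ∑ j, x i j * b j) ^ 2
      ≤ ∑ i, (∑ j, x i j * β j + e i - ∑ j, x i j * β j) ^ 2) :
    ∑ i, (∑ j, x i j * β j - ∑ j, x i j * b j) ^ 2 ≤ 4 * L * ⨆ j, |∑ i, x i j * e i| := by
  have hdist : ∑ j, |b j - β j| ≤ 2 * L := calc
    _ ≤ ∑ j, (|b j| + |β j|) := sum_le_sum fun j _ => abs_sub _ _
    _ ≤ 2 * L := by rw [sum_add_distrib]; linarith
  calc _ ≤ 2 * ∑ j, (b j - β j) * ∑ i, x i j * e i :=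
        sum_sq_sub_le_of_sum_sq_residual_le x β b e h
    _ ≤ 2 * ((∑ j, |b j - β j|) * ⨆ j, |∑ i, x i j * e i|) := by
        gcongr; exact sum_mul_le_sum_abs_mul_iSup_abs _ _
    _ ≤ 2 * ((2 * L) * ⨆ j, |∑ i, x i j * e i|) := by
        gcongr; exact Real.iSup_nonneg fun j => abs_nonneg _
    _ = 4 * L * ⨆ j, |∑ i, x i j * e i| := by ring

end

namespace ProbabilityTheory.HasSubgaussianMGF

variable {Ω : Type*} {mΩ : MeasurableSpace Ω} {μ : Measure Ω} {X : Ω → ℝ} {c : ℝ≥0}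

lemma of_map_eq_gaussianReal (hX : μ.map X = gaussianReal 0 c) : HasSubgaussianMGF X c μ := by
  have hXm : AEMeasurable X μ := aemeasurable_of_map_neZero (by rw [hX]; infer_instance)
  rw [← id_map_iff hXm, hX]
  exact ⟨integrable_exp_mul_gaussianReal, fun t => by simp [mgf_id_gaussianReal]⟩

lemma mono (h : HasSubgaussianMGF X c μ) {c' : ℝ≥0} (hc : c ≤ c') : HasSubgaussianMGF X c' μ :=
  ⟨h.integrable_exp_mul, fun t => (h.mgf_le t).trans (exp_le_exp.2 (by gcongr))⟩

lemma sum_mul_of_iIndepFun {ι : Type*} [Fintype ι] {ε : ι → Ω → ℝ} (hindep : iIndepFun ε μ)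
    (h : ∀ i, HasSubgaussianMGF (ε i) c μ) (a : ι → ℝ) {c' : ℝ≥0}
    (hc' : (∑ i, a i ^ 2) * c ≤ c') :
    HasSubgaussianMGF (fun ω => ∑ i, a i * ε i ω) c' μ := by
  have hsum := sum_of_iIndepFun (s := univ)
    (hindep.comp (fun i r => a i * r) fun i => measurable_const_mul (a i))
    fun i _ => (h i).const_mul (a i)
  refine hsum.mono ?_
  rw [← NNReal.coe_le_coe, NNReal.coe_sum]
  exact (sum_mul ..).symm.trans_le hc'

variable {ι : Type*} [Fintype ι] [Nonempty ι] {Y : ι → Ω → ℝ}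

lemma integrable_iSup_abs (h : ∀ j, HasSubgaussianMGF (Y j) c μ) :
    Integrable (fun ω => ⨆ j, |Y j ω|) μ := by
  refine (integrable_finsetSum univ fun j _ => (h j).integrable.abs).mono'
    (AEMeasurable.iSup fun j => (h j).aemeasurable.abs).aestronglyMeasurable
    (ae_of_all _ fun ω => ?_)
  rw [norm_of_nonneg (Real.iSup_nonneg fun j => abs_nonneg _)]
  exact ciSup_le fun j => single_le_sum (f := fun j => |Y j ω|) (fun _ _ => abs_nonneg _)
    (mem_univ j)

variable [IsProbabilityMeasure μ]

lemma integral_iSup_abs_le_of_pos (h : ∀ j, HasSubgaussianMGF (Y j) c μ) {t : ℝ} (ht : 0 < t) :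
    ∫ ω, ⨆ j, |Y j ω| ∂μ ≤ (log (2 * Fintype.card ι) + c * t ^ 2 / 2) / t := by
  set W : Ω → ℝ := fun ω => ∑ k, (exp (t * Y k ω) + exp (-t * Y k ω))
  have hW1 : ∀ ω, 1 ≤ W ω := fun ω =>
    (one_le_exp (by positivity)).trans (exp_mul_abs_le_sum_exp (Y · ω) t (Classical.arbitrary ι))
  have hint : ∀ k, Integrable (fun ω => exp (t * Y k ω) + exp (-t * Y k ω)) μ := fun k =>
    ((h k).integrable_exp_mul t).add ((h k).integrable_exp_mul (-t))
  have hWint : Integrable W μ := integrable_finsetSum univ fun k _ => hint k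
  have hlogint : Integrable (fun ω => log (W ω)) μ := by
    refine hWint.mono' hWint.aemeasurable.log.aestronglyMeasurable (ae_of_all _ fun ω => ?_)
    rw [norm_of_nonneg (log_nonneg (hW1 ω))]
    exact log_le_self (zero_le_one.trans (hW1 ω))
  have hEW : ∫ ω, W ω ∂μ ≤ 2 * Fintype.card ι * exp (c * t ^ 2 / 2) := by
    rw [integral_finsetSum univ fun k _ => hint k]
    calc ∑ k, ∫ ω, (exp (t * Y k ω) + exp (-t * Y k ω)) ∂μ
        = ∑ k, (mgf (Y k) μ t + mgf (Y k) μ (-t)) := sum_congr rfl fun k _ =>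
          integral_add ((h k).integrable_exp_mul t) ((h k).integrable_exp_mul (-t))
      _ ≤ ∑ _k : ι, 2 * exp (c * t ^ 2 / 2) := sum_le_sum fun k _ => by
          linarith [(h k).mgf_le t, neg_sq t ▸ (h k).mgf_le (-t)]
      _ = 2 * Fintype.card ι * exp (c * t ^ 2 / 2) := by
          rw [sum_const, card_univ, nsmul_eq_mul]; ring
  have hjensen : ∫ ω, log (W ω) ∂μ ≤ log (∫ ω, W ω ∂μ) :=
    (strictConcaveOn_log_Ioi.concaveOn.subset (Set.Ici_subset_Ioi.2 one_pos)
      (convex_Ici 1)).le_map_integral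
        (continuousOn_log.mono fun _ hx => (zero_lt_one.trans_le hx).ne') isClosed_Ici
        (ae_of_all _ hW1) hWint hlogint
  calc ∫ ω, ⨆ j, |Y j ω| ∂μ ≤ ∫ ω, log (W ω) / t ∂μ :=
        integral_mono_of_nonneg (ae_of_all _ fun ω => Real.iSup_nonneg fun j => abs_nonneg _)
          (hlogint.div_const t) (ae_of_all _ fun ω => iSup_abs_le_log_sum_exp_div (Y · ω) ht)
    _ = (∫ ω, log (W ω) ∂μ) / t := integral_div t _
    _ ≤ log (2 * Fintype.card ι * exp (c * t ^ 2 / 2)) / t := by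
        gcongr
        have hEWpos : 0 < ∫ ω, W ω ∂μ :=
          (integral_mono (integrable_const 1) hWint hW1).trans_lt' (by simp)
        exact hjensen.trans (log_le_log hEWpos hEW)
    _ = (log (2 * Fintype.card ι) + c * t ^ 2 / 2) / t := by
        rw [log_mul (by positivity) (exp_ne_zero _), log_exp]

lemma integral_iSup_abs_le (h : ∀ j, HasSubgaussianMGF (Y j) c μ) :
    ∫ ω, ⨆ j, |Y j ω| ∂μ ≤ √(2 * c * log (2 * Fintype.card ι)) := by
  rcases eq_or_ne c 0 with rfl | hc
  · have hzero : (fun ω => ⨆ j, |Y j ω|) =ᵐ[μ] 0 := by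
      filter_upwards [ae_all_iff.2 fun j => (h j).ae_eq_zero_of_hasSubgaussianMGF_zero] with ω hω
      simp [hω]
    simp [integral_congr_ae hzero]
  set G := log (2 * Fintype.card ι)
  have hG : 0 < G := log_pos (by
    have : (1 : ℝ) ≤ Fintype.card ι := by exact_mod_cast Fintype.card_pos
    linarith)
  have hc : 0 < (c : ℝ) := by positivity
  refine (integral_iSup_abs_le_of_pos h (t := √(2 * G / c)) (by positivity)).trans_eq ?_
  rw [sq_sqrt (by positivity), eq_comm, eq_div_iff (by positivity), ← sqrt_mul (by positivity),
    show 2 * c * G * (2 * G / c) = (2 * G) ^ 2 by field_simp, sqrt_sq (by positivity)]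
  field_simp
  ring

end ProbabilityTheory.HasSubgaussianMGF

theorem stmt19_general {Ω : Type*} [MeasureSpace Ω] [IsProbabilityMeasure (ℙ : Measure Ω)]
    (n p : ℕ) (hp : 0 < p)
    (x : Fin n → Fin p → ℝ) (βs : Fin p → ℝ)
    (M : ℝ) (hM : M = ⨆ j : Fin p, (1 / n : ℝ) * ∑ i, x i j ^ 4)
    (L : ℝ) (hβs : ∑ j, |βs j| ≤ L)
    (σ : ℝ) (hσ : 0 < σ)
    (ε : Fin n → Ω → ℝ)
    (hindep : iIndepFun ε ℙ)
    (hgauss : ∀ i, Measure.map (ε i) ℙ = gaussianReal 0 ⟨σ ^ 2, sq_nonneg σ⟩)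
    (y : Fin n → Ω → ℝ) (hy : ∀ i ω, y i ω = ∑ j, x i j * βs j + ε i ω)
    (βhat : Ω → Fin p → ℝ)
    (hβL : ∀ ω, ∑ j, |βhat ω j| ≤ L)
    (hβmin : ∀ ω, ∑ i, (y i ω - ∑ j, x i j * βhat ω j) ^ 2
      ≤ ∑ i, (y i ω - ∑ j, x i j * βs j) ^ 2) :
    ∫ ω, ∑ i, ((∑ j, x i j * βs j) - ∑ j, x i j * βhat ω j) ^ 2 ∂ℙ
      ≤ 4 * L * σ * Real.sqrt (2 * n * Real.sqrt M * Real.log (2 * p)) := by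
  have : Nonempty (Fin p) := ⟨⟨0, hp⟩⟩
  set V : Fin p → Ω → ℝ := fun j ω => ∑ i, x i j * ε i ω
  set c : ℝ≥0 := ⟨σ ^ 2 * (n * √M), by positivity⟩
  have hc : (c : ℝ) = σ ^ 2 * (n * √M) := rfl
  have hcol : ∀ j, ∑ i, x i j ^ 2 ≤ n * √M := fun j => by
    simpa using sum_sq_le_card_mul_sqrt (fun i => x i j)
      (by simpa [hM] using
        le_ciSup (Finite.bddAbove_range fun j => 1 / (n : ℝ) * ∑ i, x i j ^ 4) j)
  have hV : ∀ j, HasSubgaussianMGF (V j) c ℙ := fun j =>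
    .sum_mul_of_iIndepFun hindep (fun i => .of_map_eq_gaussianReal (hgauss i)) _ <|
      show (∑ i, x i j ^ 2) * σ ^ 2 ≤ σ ^ 2 * (n * √M) by nlinarith [hcol j, sq_nonneg σ]
  have hL0 : 0 ≤ L := (sum_nonneg fun j _ => abs_nonneg (βs j)).trans hβs
  have hpointwise : ∀ ω, ∑ i, ((∑ j, x i j * βs j) - ∑ j, x i j * βhat ω j) ^ 2
      ≤ 4 * L * ⨆ j, |V j ω| := fun ω =>
    sum_sq_sub_le_four_mul_iSup_abs x βs (βhat ω) (ε · ω) hβs (hβL ω)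
      (by simpa only [hy] using hβmin ω)
  calc _ ≤ ∫ ω, 4 * L * ⨆ j, |V j ω| ∂ℙ :=
        integral_mono_of_nonneg (ae_of_all _ fun ω => sum_nonneg fun i _ => sq_nonneg _)
          ((HasSubgaussianMGF.integrable_iSup_abs hV).const_mul _) (ae_of_all _ hpointwise)
    _ = 4 * L * ∫ ω, ⨆ j, |V j ω| ∂ℙ := integral_const_mul _ _
    _ ≤ 4 * L * √(2 * c * log (2 * p)) := by
        gcongr
        simpa using HasSubgaussianMGF.integral_iSup_abs_le hV
    _ = 4 * L * σ * √(2 * n * √M * log (2 * p)) := by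
        rw [show (2 * c * log (2 * p) : ℝ) = σ ^ 2 * (2 * n * √M * log (2 * p)) by rw [hc]; ring,
          sqrt_mul (sq_nonneg σ), sqrt_sq hσ.le, mul_assoc (4 * L)]

/-- If `β̂` is measurable w.r.t. `ε`, satisfies `|β̂|₁ ≤ L` and
`‖Y − Xβ̂‖² ≤ ‖Y − Xβ*‖²` where `Y = Xβ* + ε`, and `|β*|₁ ≤ L`, then
`E ‖Xβ* − Xβ̂‖² ≤ 4Lσ (2 n M^{1/2} log(2p))^{1/2}`.  (In particular this holds for any
measurable minimizer of `‖Y − Xβ‖` subject to `|β|₁ ≤ L`.) -/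
theorem stmt19 {Ω : Type*} [MeasureSpace Ω] [IsProbabilityMeasure (ℙ : Measure Ω)]
    (n p : ℕ) (hn : 0 < n) (hp : 0 < p)
    (x : Fin n → Fin p → ℝ) (βs : Fin p → ℝ)
    (M : ℝ) (hM : M = ⨆ j : Fin p, (1 / n : ℝ) * ∑ i, x i j ^ 4)
    (L : ℝ) (hL : 0 < L) (hβs : ∑ j, |βs j| ≤ L)
    (σ : ℝ) (hσ : 0 < σ)
    (ε : Fin n → Ω → ℝ)
    (hmeas : ∀ i, Measurable (ε i))
    (hindep : iIndepFun ε ℙ)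
    (hgauss : ∀ i, Measure.map (ε i) ℙ = gaussianReal 0 ⟨σ ^ 2, sq_nonneg σ⟩)
    (y : Fin n → Ω → ℝ) (hy : ∀ i ω, y i ω = ∑ j, x i j * βs j + ε i ω)
    (βhat : Ω → Fin p → ℝ)
    (hβmeas : @Measurable Ω (Fin p → ℝ)
      (MeasurableSpace.comap (fun ω (i : Fin n) => ε i ω) inferInstance) _ βhat)
    (hβL : ∀ ω, ∑ j, |βhat ω j| ≤ L)
    (hβmin : ∀ ω, ∑ i, (y i ω - ∑ j, x i j * βhat ω j) ^ 2
      ≤ ∑ i, (y i ω - ∑ j, x i j * βs j) ^ 2) :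
    ∫ ω, ∑ i, ((∑ j, x i j * βs j) - ∑ j, x i j * βhat ω j) ^ 2 ∂ℙ
      ≤ 4 * L * σ * Real.sqrt (2 * n * Real.sqrt M * Real.log (2 * p)) :=
  stmt19_general n p hp x βs M hM L hβs σ hσ ε hindep hgauss y hy βhat hβL hβmin
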